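/- arXiv:2412.19703 — 5 statements merged into one kernel-verified Lean document; each statement's English description precedes it below -/
import Mathlib

section
/- Let θ ∈ ℝ and let A, B be 2×2 complex matrices. Define the Pauli matrices σ₂ = [[0,−i],[i,0]] and σ₃ = [[1,0],[0,−1]], and e^{−iθσ₃} = diag(e^{−iθ}, e^{iθ}). (i) If A = B·[[0, −i e^{iθ}],[−i e^{−iθ}, 1]] and B = A·σ₂·e^{−iθσ₃}, then the first column of A is zero and the second column of B is zero. (ii) If A = B·[[0, i e^{iθ}],[i e^{−iθ}, 1]] and B = −A·σ₂·e^{−iθσ₃}, then the first column of A is zero and the second column of B is zero. (These are the boundary-value relations of the Riemann–Hilbert solution m at z = q₀ and z = −q₀, and they force the columns m₁⁺ and m₂⁻ to vanish there.) -/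
open Complex Matrix

/-- boundary-value relations of the RHP solution at `z = ±q₀` force the
columns `m₁⁺` and `m₂⁻` to vanish there. -/
theorem rhp_boundary_columns_vanish (θ : ℝ) :
    (∀ A B : Matrix (Fin 2) (Fin 2) ℂ,
      A = B * !![0, -Complex.I * Complex.exp (Complex.I * θ);
                 -Complex.I * Complex.exp (-(Complex.I * θ)), 1] →
      B = A * !![0, -Complex.I; Complex.I, 0] *
            !![Complex.exp (-(Complex.I * θ)), 0; 0, Complex.exp (Complex.I * θ)] →
      (∀ i, A i 0 = 0) ∧ (∀ i, B i 1 = 0)) ∧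
    (∀ A B : Matrix (Fin 2) (Fin 2) ℂ,
      A = B * !![0, Complex.I * Complex.exp (Complex.I * θ);
                 Complex.I * Complex.exp (-(Complex.I * θ)), 1] →
      B = -(A * !![0, -Complex.I; Complex.I, 0] *
            !![Complex.exp (-(Complex.I * θ)), 0; 0, Complex.exp (Complex.I * θ)]) →
      (∀ i, A i 0 = 0) ∧ (∀ i, B i 1 = 0)) := by
  have key : Complex.exp (Complex.I * θ) * Complex.exp (-(Complex.I * θ)) = 1 := by
    rw [← Complex.exp_add, add_neg_cancel, Complex.exp_zero]
  constructor
  · intro A B hA hB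
    have hA0 : ∀ i, A i 0 = 0 := by
      intro i
      have h : A i 0 = -(A i 0) := by
        conv_lhs => rw [hA, hB]
        simp [Matrix.mul_apply, Fin.sum_univ_two]
        linear_combination (A i 0 * Complex.exp (Complex.I * θ) * Complex.exp (-(Complex.I * θ))) * Complex.I_sq - (A i 0) * key
      exact add_self_eq_zero.mp (by linear_combination h)
    refine ⟨hA0, fun i => ?_⟩
    rw [hB]
    simp [Matrix.mul_apply, Fin.sum_univ_two, hA0 i]
  · intro A B hA hB
    have hA0 : ∀ i, A i 0 = 0 := by
      intro i
      have h : A i 0 = -(A i 0) := by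
        conv_lhs => rw [hA, hB]
        simp [Matrix.mul_apply, Fin.sum_univ_two]
        linear_combination (A i 0 * Complex.exp (Complex.I * θ) * Complex.exp (-(Complex.I * θ))) * Complex.I_sq - (A i 0) * key
      exact add_self_eq_zero.mp (by linear_combination h)
    refine ⟨hA0, fun i => ?_⟩
    rw [hB]
    simp [Matrix.mul_apply, Fin.sum_univ_two, hA0 i]
end

section
/- Let q₀ > 0, θ ∈ ℝ, and let M be an invertible 2×2 complex matrix. Define σ₂ = [[0,−i],[i,0]], e^{−iθσ₃} = diag(e^{−iθ}, e^{iθ}), and for z ∈ ℂ, z ≠ 0, set E(z) = I₂ + (q₀/z)·σ₂·e^{−iθσ₃}·M⁻¹. Then det E(z) = 1 − q₀²/z² holds for all z ≠ 0 if and only if M₂₁ = e^{−2iθ} M₁₂ and det M = 1. -/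
open Complex Matrix

/-! For a `2 × 2` matrix `A`, `det (1 + t • A) = 1 + t * tr A + t² * det A`. With
`A = σ₂ e^{−iθσ₃} M⁻¹` (an antidiagonal matrix times `M⁻¹`) and `t = q₀ / z`, one has
`det A = −1 / det M` and `tr A = i e^{iθ} (M₂₁ − e^{−2iθ} M₁₂) / det M`, so `det E(z)` is a
quadratic in `q₀ / z`, and comparing it with `1 − (q₀ / z)²` gives exactly the two conditions. -/

/-- The matrix `E(z) = I₂ + (q₀/z)·σ₂·e^{−iθσ₃}·M⁻¹`. -/
noncomputable def Emat (q₀ θ : ℝ) (M : Matrix (Fin 2) (Fin 2) ℂ) (z : ℂ) :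
    Matrix (Fin 2) (Fin 2) ℂ :=
  1 + ((q₀ : ℂ) / z) •
    (!![0, -Complex.I; Complex.I, 0] *
      !![Complex.exp (-(Complex.I * θ)), 0; 0, Complex.exp (Complex.I * θ)] * M⁻¹)

namespace Matrix

variable {R K : Type*} [CommRing R] [Field K]

theorem det_one_add_smul_fin_two (t : R) (A : Matrix (Fin 2) (Fin 2) R) :
    det (1 + t • A) = 1 + t * trace A + t ^ 2 * det A := by
  simp only [det_fin_two, trace_fin_two, add_apply, smul_apply, smul_eq_mul, one_apply_eq,
    one_apply_ne zero_ne_one, one_apply_ne one_ne_zero]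
  ring

theorem trace_antidiag_mul_inv (a b : K) (M : Matrix (Fin 2) (Fin 2) K) :
    trace (!![0, a; b, 0] * M⁻¹) = -(a * M 1 0 + b * M 0 1) / M.det := by
  rw [inv_def, Ring.inverse_eq_inv', adjugate_fin_two, mul_smul_comm, mul_fin_two, trace_smul,
    trace_fin_two_of, smul_eq_mul]
  ring

theorem det_antidiag_mul_inv (a b : K) (M : Matrix (Fin 2) (Fin 2) K) :
    det (!![0, a; b, 0] * M⁻¹) = -(a * b) / M.det := by
  rw [det_mul, det_nonsing_inv, Ring.inverse_eq_inv', det_fin_two_of]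
  ring

end Matrix

theorem forall_one_add_div_mul_add_div_sq_mul_iff {K : Type*} [Field K] [NeZero (2 : K)]
    {c T D : K} (hc : c ≠ 0) :
    (∀ z ≠ 0, 1 + c / z * T + (c / z) ^ 2 * D = 1 - c ^ 2 / z ^ 2) ↔ T = 0 ∧ D = -1 := by
  refine ⟨fun h ↦ ?_, fun ⟨hT, hD⟩ z _ ↦ by rw [hT, hD, div_pow]; ring⟩
  -- the evaluations at z = ±c isolate the odd and the even coefficient
  have hpos := h c hc
  have hneg := h (-c) (neg_ne_zero.mpr hc)
  simp only [div_neg, neg_sq, div_self hc, div_self (pow_ne_zero 2 hc)] at hpos hneg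
  have h2 : (2 : K) ≠ 0 := two_ne_zero
  constructor
  · have h2T : 2 * T = 0 := by linear_combination hpos - hneg
    exact (mul_eq_zero.mp h2T).resolve_left h2
  · have h2D : 2 * D = 2 * -1 := by linear_combination hpos + hneg
    exact mul_left_cancel₀ h2 h2D

theorem sigma_two_mul_exp_sigma_three (θ : ℝ) :
    !![0, -I; I, 0] * !![exp (-(I * θ)), 0; 0, exp (I * θ)] =
      !![0, -I * exp (I * θ); I * exp (-(I * θ)), 0] := by
  simp

theorem det_Emat_iff_general (q₀ θ : ℝ) (hq₀ : 0 < q₀) (M : Matrix (Fin 2) (Fin 2) ℂ) :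
    (∀ z : ℂ, z ≠ 0 → (Emat q₀ θ M z).det = 1 - (q₀ : ℂ) ^ 2 / z ^ 2) ↔
      (M 1 0 = Complex.exp (-(2 * Complex.I * θ)) * M 0 1 ∧ M.det = 1) := by
  have hq : (q₀ : ℂ) ≠ 0 := by exact_mod_cast hq₀.ne'
  simp only [Emat, sigma_two_mul_exp_sigma_three, det_one_add_smul_fin_two,
    trace_antidiag_mul_inv, det_antidiag_mul_inv]
  rw [forall_one_add_div_mul_add_div_sq_mul_iff hq]
  have hexp : exp (I * θ) * exp (-(I * θ)) = 1 := by rw [← exp_add, add_neg_cancel, exp_zero]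
  have hab : -I * exp (I * θ) * (I * exp (-(I * θ))) = 1 := by
    linear_combination hexp - exp (I * θ) * exp (-(I * θ)) * I_sq
  have htrace : -(-I * exp (I * θ) * M 1 0 + I * exp (-(I * θ)) * M 0 1) =
      I * exp (I * θ) * (M 1 0 - exp (-(2 * I * θ)) * M 0 1) := by
    rw [show -(2 * I * θ) = -(I * θ) + -(I * θ) by ring, exp_add]
    linear_combination (I * exp (-(I * θ)) * M 0 1) * hexp
  have hdet : -1 / M.det = -1 ↔ M.det = 1 := by rw [neg_div, neg_inj, one_div, inv_eq_one]
  rw [hab, hdet]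
  refine and_congr_left fun hone ↦ ?_
  rw [hone, div_one, htrace, mul_eq_zero, or_iff_right (mul_ne_zero I_ne_zero (exp_ne_zero _)),
    sub_eq_zero]

/-- `det E(z) = 1 − q₀²/z²` for all `z ≠ 0` iff `M₂₁ = e^{−2iθ}M₁₂` and
`det M = 1`. -/
theorem det_Emat_iff (q₀ θ : ℝ) (hq₀ : 0 < q₀) (M : Matrix (Fin 2) (Fin 2) ℂ)
    (hM : IsUnit M.det) :
    (∀ z : ℂ, z ≠ 0 → (Emat q₀ θ M z).det = 1 - (q₀ : ℂ) ^ 2 / z ^ 2) ↔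
      (M 1 0 = Complex.exp (-(2 * Complex.I * θ)) * M 0 1 ∧ M.det = 1) :=
  det_Emat_iff_general q₀ θ hq₀ M
end

section
/- For box parameters L ≥ 0, q₀ > 0, h ≥ 0, θ, α ∈ ℝ, define for z ∈ ℝ ∖ {0, q₀, −q₀}: a(z) = (1/(λ(z)μ(z)))·e^{i(2Lλ(z)+θ)}·{ μ(z)cos(2Lμ(z))[λ(z)cos θ − i k(z) sin θ] + i sin(2Lμ(z))[ h q₀ cos α − k(z)(k(z)cos θ − i λ(z)sin θ) ] } and b(z) = (1/(λ(z)μ(z)))·{ −q₀ μ(z) sin θ cos(2Lμ(z)) + [h k(z)cos α − k(z) q₀ cos θ − i h λ(z) sin α] sin(2Lμ(z)) }, where k(z) = (z + q₀²/z)/2, λ(z) = (z − q₀²/z)/2, and μ(z) is a square root of k(z)² − h² (a and b are independent of the choice of square root since they depend on μ only through cos(2Lμ) and sin(2Lμ)/μ). Then for all real z ∉ {0, q₀, −q₀}: a(q₀²/z) = e^{2iθ}·conj(a(z)) and b(q₀²/z) = −conj(b(z)); consequently ρ(z) = b(z)/a(z) satisfies ρ(q₀²/z) = −e^{−2iθ}·conj(ρ(z))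 wherever a(z) ≠ 0. -/
open Complex

/-- `k(z) = (z + q₀²/z)/2`. -/
noncomputable def kk (q₀ z : ℝ) : ℝ := (z + q₀ ^ 2 / z) / 2

/-- `λ(z) = (z − q₀²/z)/2`. -/
noncomputable def lam (q₀ z : ℝ) : ℝ := (z - q₀ ^ 2 / z) / 2

/-- The explicit box scattering coefficient `a(z)`, for a choice `μ` of square root of
`k(z)² − h²`. -/
noncomputable def aBox (L q₀ h θ α : ℝ) (μ : ℝ → ℂ) (z : ℝ) : ℂ :=
  1 / ((lam q₀ z : ℂ) * μ z) *
    Complex.exp (Complex.I * ((2 * L * lam q₀ z + θ : ℝ) : ℂ)) *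
    (μ z * Complex.cos (2 * (L : ℂ) * μ z) *
        ((lam q₀ z : ℂ) * (Real.cos θ : ℂ) - Complex.I * (kk q₀ z : ℂ) * (Real.sin θ : ℂ)) +
      Complex.I * Complex.sin (2 * (L : ℂ) * μ z) *
        (((h * q₀ * Real.cos α : ℝ) : ℂ) -
          (kk q₀ z : ℂ) *
            ((kk q₀ z : ℂ) * (Real.cos θ : ℂ) -
              Complex.I * (lam q₀ z : ℂ) * (Real.sin θ : ℂ))))

/-- The explicit box scattering coefficient `b(z)`, for a choice `μ` of square root of
`k(z)² − h²`. -/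
noncomputable def bBox (L q₀ h θ α : ℝ) (μ : ℝ → ℂ) (z : ℝ) : ℂ :=
  1 / ((lam q₀ z : ℂ) * μ z) *
    (-(q₀ : ℂ) * μ z * (Real.sin θ : ℂ) * Complex.cos (2 * (L : ℂ) * μ z) +
      (((h * kk q₀ z * Real.cos α - kk q₀ z * q₀ * Real.cos θ : ℝ) : ℂ) -
          Complex.I * (h : ℂ) * (lam q₀ z : ℂ) * (Real.sin α : ℂ)) *
        Complex.sin (2 * (L : ℂ) * μ z))

/-! The coefficients depend on `μ` only through the even functions `cos (2Lμ)` and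
`sin (2Lμ) / μ`, so the two square roots `± conj μ(z)` of `k(z)² − h²` give the same values.
Since `z ↦ q₀²/z` fixes `k` and negates `λ`, while `μ(q₀²/z)` is one of these two roots,
the symmetries reduce to conjugating the explicit formulas with `λ` replaced by `−λ`. -/

open ComplexConjugate

/-- The formula defining `aBox` (and below `bBox`), as a function of `λ(z)`, `k(z)`, `μ(z)`. -/
noncomputable def aCoeff (L q₀ h θ α l k : ℝ) (m : ℂ) : ℂ :=
  1 / ((l : ℂ) * m) * exp (I * ((2 * L * l + θ : ℝ) : ℂ)) *
    (m * cos (2 * (L : ℂ) * m) * ((l : ℂ) * (Real.cos θ : ℂ) - I * (k : ℂ) * (Real.sin θ : ℂ)) +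
      I * sin (2 * (L : ℂ) * m) *
        (((h * q₀ * Real.cos α : ℝ) : ℂ) -
          (k : ℂ) * ((k : ℂ) * (Real.cos θ : ℂ) - I * (l : ℂ) * (Real.sin θ : ℂ))))

noncomputable def bCoeff (L q₀ h θ α l k : ℝ) (m : ℂ) : ℂ :=
  1 / ((l : ℂ) * m) *
    (-(q₀ : ℂ) * m * (Real.sin θ : ℂ) * cos (2 * (L : ℂ) * m) +
      (((h * k * Real.cos α - k * q₀ * Real.cos θ : ℝ) : ℂ) -
          I * (h : ℂ) * (l : ℂ) * (Real.sin α : ℂ)) * sin (2 * (L : ℂ) * m))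

theorem aBox_eq_aCoeff (L q₀ h θ α : ℝ) (μ : ℝ → ℂ) (z : ℝ) :
    aBox L q₀ h θ α μ z = aCoeff L q₀ h θ α (lam q₀ z) (kk q₀ z) (μ z) := rfl

theorem bBox_eq_bCoeff (L q₀ h θ α : ℝ) (μ : ℝ → ℂ) (z : ℝ) :
    bBox L q₀ h θ α μ z = bCoeff L q₀ h θ α (lam q₀ z) (kk q₀ z) (μ z) := rfl

section Coeff

variable (L q₀ h θ α l k : ℝ) (m : ℂ)

theorem aCoeff_neg : aCoeff L q₀ h θ α l k (-m) = aCoeff L q₀ h θ α l k m := by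
  simp only [aCoeff, mul_neg, cos_neg, sin_neg]
  ring

theorem bCoeff_neg : bCoeff L q₀ h θ α l k (-m) = bCoeff L q₀ h θ α l k m := by
  simp only [bCoeff, mul_neg, cos_neg, sin_neg]
  ring

theorem aCoeff_neg_conj :
    aCoeff L q₀ h θ α (-l) k (conj m) = exp (2 * I * θ) * conj (aCoeff L q₀ h θ α l k m) := by
  have hexp : exp (I * ((2 * L * -l + θ : ℝ) : ℂ)) =
      exp (2 * I * θ) * exp (-I * ((2 * L * l + θ : ℝ) : ℂ)) := by
    rw [← exp_add]
    congr 1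
    push_cast
    ring
  simp only [aCoeff, hexp, map_mul, map_add, map_sub, map_div₀, map_one, map_ofNat, conj_I,
    conj_ofReal, ← exp_conj, ← cos_conj, ← sin_conj]
  push_cast
  ring

theorem bCoeff_neg_conj :
    bCoeff L q₀ h θ α (-l) k (conj m) = -conj (bCoeff L q₀ h θ α l k m) := by
  simp only [bCoeff, map_mul, map_add, map_sub, map_neg, map_div₀, map_one, map_ofNat, conj_I,
    conj_ofReal, ← cos_conj, ← sin_conj]
  push_cast
  ring

end Coeff

theorem kk_sq_div {q₀ : ℝ} (hq₀ : q₀ ≠ 0) (z : ℝ) : kk q₀ (q₀ ^ 2 / z) = kk q₀ z := by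
  rw [kk, kk, div_div_cancel₀ (pow_ne_zero 2 hq₀), add_comm]

theorem lam_sq_div {q₀ : ℝ} (hq₀ : q₀ ≠ 0) (z : ℝ) : lam q₀ (q₀ ^ 2 / z) = -lam q₀ z := by
  rw [lam, lam, div_div_cancel₀ (pow_ne_zero 2 hq₀)]
  ring

theorem div_eq_neg_inv_mul_conj_div {K : Type*} [Field K] [StarRing K] {a b a' b' c : K}
    (ha : a' = c * conj a) (hb : b' = -conj b) :
    b' / a' = -c⁻¹ * conj (b / a) := by
  rw [ha, hb, map_div₀]
  ring

theorem box_scattering_symmetry_general (L q₀ h θ α : ℝ) (hq₀ : 0 < q₀)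
    (μ : ℝ → ℂ)
    (hμ : ∀ z : ℝ, z ≠ 0 → (μ z) ^ 2 = (kk q₀ z : ℂ) ^ 2 - (h : ℂ) ^ 2) :
    ∀ z : ℝ, z ≠ 0 → z ≠ q₀ → z ≠ -q₀ →
      aBox L q₀ h θ α μ (q₀ ^ 2 / z) =
        Complex.exp (2 * Complex.I * θ) * (starRingEnd ℂ) (aBox L q₀ h θ α μ z) ∧
      bBox L q₀ h θ α μ (q₀ ^ 2 / z) = -(starRingEnd ℂ) (bBox L q₀ h θ α μ z) ∧
      (aBox L q₀ h θ α μ z ≠ 0 →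
        bBox L q₀ h θ α μ (q₀ ^ 2 / z) / aBox L q₀ h θ α μ (q₀ ^ 2 / z) =
          -Complex.exp (-(2 * Complex.I * θ)) *
            (starRingEnd ℂ) (bBox L q₀ h θ α μ z / aBox L q₀ h θ α μ z)) := by
  intro z hz _ _
  have hq₀' : q₀ ≠ 0 := hq₀.ne'
  have hroot : μ (q₀ ^ 2 / z) = conj (μ z) ∨ μ (q₀ ^ 2 / z) = -conj (μ z) := by
    refine sq_eq_sq_iff_eq_or_eq_neg.mp ?_
    rw [hμ _ (div_ne_zero (pow_ne_zero 2 hq₀') hz), ← map_pow, hμ _ hz, kk_sq_div hq₀']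
    simp only [map_sub, map_pow, conj_ofReal]
  have ha : aBox L q₀ h θ α μ (q₀ ^ 2 / z) = exp (2 * I * θ) * conj (aBox L q₀ h θ α μ z) := by
    rw [aBox_eq_aCoeff, aBox_eq_aCoeff, kk_sq_div hq₀', lam_sq_div hq₀',
      ← aCoeff_neg_conj]
    rcases hroot with h | h <;> simp only [h, aCoeff_neg]
  have hb : bBox L q₀ h θ α μ (q₀ ^ 2 / z) = -conj (bBox L q₀ h θ α μ z) := by
    rw [bBox_eq_bCoeff, bBox_eq_bCoeff, kk_sq_div hq₀', lam_sq_div hq₀',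
      ← bCoeff_neg_conj]
    rcases hroot with h | h <;> simp only [h, bCoeff_neg]
  refine ⟨ha, hb, fun _ => ?_⟩
  rw [exp_neg]
  exact div_eq_neg_inv_mul_conj_div ha hb

/-- symmetry of the box scattering coefficients under `z ↦ q₀²/z`:
`a(q₀²/z) = e^{2iθ}·conj(a(z))`, `b(q₀²/z) = −conj(b(z))`, and consequently
`ρ(q₀²/z) = −e^{−2iθ}·conj(ρ(z))` wherever `a(z) ≠ 0`. -/
theorem box_scattering_symmetry (L q₀ h θ α : ℝ) (hL : 0 ≤ L) (hq₀ : 0 < q₀) (hh : 0 ≤ h)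
    (μ : ℝ → ℂ)
    (hμ : ∀ z : ℝ, z ≠ 0 → (μ z) ^ 2 = (kk q₀ z : ℂ) ^ 2 - (h : ℂ) ^ 2) :
    ∀ z : ℝ, z ≠ 0 → z ≠ q₀ → z ≠ -q₀ →
      aBox L q₀ h θ α μ (q₀ ^ 2 / z) =
        Complex.exp (2 * Complex.I * θ) * (starRingEnd ℂ) (aBox L q₀ h θ α μ z) ∧
      bBox L q₀ h θ α μ (q₀ ^ 2 / z) = -(starRingEnd ℂ) (bBox L q₀ h θ α μ z) ∧
      (aBox L q₀ h θ α μ z ≠ 0 →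
        bBox L q₀ h θ α μ (q₀ ^ 2 / z) / aBox L q₀ h θ α μ (q₀ ^ 2 / z) =
          -Complex.exp (-(2 * Complex.I * θ)) *
            (starRingEnd ℂ) (bBox L q₀ h θ α μ z / aBox L q₀ h θ α μ z)) :=
  box_scattering_symmetry_general L q₀ h θ α hq₀ μ hμ
end

section
/- For box parameters L ≥ 0, q₀ > 0, h > q₀, θ, α ∈ ℝ, let a(z) and b(z) be the explicit box scattering coefficients (defined via k(z) = (z+q₀²/z)/2, λ(z) = (z−q₀²/z)/2 and either square root μ(z) of k(z)² − h²), and set μ₀ = √(h² − q₀²) > 0. Then the limits α₊ = lim_{z→q₀} (z − q₀)·a(z) and α₋ = lim_{z→−q₀} (z + q₀)·a(z) exist, with α± = i q₀ e^{iθ}·[ ∓ sin θ · cosh(2Lμ₀) + (h cos α − q₀ cos θ)·sinh(2Lμ₀)/μ₀ ]; similarly β₊ = lim_{z→q₀} (z − q₀)·b(z) and β₋ = lim_{z→−q₀} (z + q₀)·b(z) exist, with β± = −q₀·[ sin θ · cosh(2Lμ₀) ∓ (h cos α − q₀ cos θ)·sinh(2Lμ₀)/μ₀ ]. In particular β± =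 ∓ i e^{−iθ} α± and β± are real. -/
open Complex Topology Filter

/-- `μ₀ = √(h² − q₀²)`. -/
noncomputable def mu0 (q₀ h : ℝ) : ℝ := Real.sqrt (h ^ 2 - q₀ ^ 2)

/-- `α₊ = i q₀ e^{iθ}·[−sin θ·cosh(2Lμ₀) + (h cos α − q₀ cos θ)·sinh(2Lμ₀)/μ₀]`. -/
noncomputable def alphaPlus (L q₀ h θ α : ℝ) : ℂ :=
  Complex.I * (q₀ : ℂ) * Complex.exp (Complex.I * (θ : ℂ)) *
    ((-Real.sin θ * Real.cosh (2 * L * mu0 q₀ h) +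
        (h * Real.cos α - q₀ * Real.cos θ) * Real.sinh (2 * L * mu0 q₀ h) / mu0 q₀ h : ℝ) : ℂ)

/-- `α₋ = i q₀ e^{iθ}·[sin θ·cosh(2Lμ₀) + (h cos α − q₀ cos θ)·sinh(2Lμ₀)/μ₀]`. -/
noncomputable def alphaMinus (L q₀ h θ α : ℝ) : ℂ :=
  Complex.I * (q₀ : ℂ) * Complex.exp (Complex.I * (θ : ℂ)) *
    ((Real.sin θ * Real.cosh (2 * L * mu0 q₀ h) +
        (h * Real.cos α - q₀ * Real.cos θ) * Real.sinh (2 * L * mu0 q₀ h) / mu0 q₀ h : ℝ) : ℂ)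

/-- `β₊ = −q₀·[sin θ·cosh(2Lμ₀) − (h cos α − q₀ cos θ)·sinh(2Lμ₀)/μ₀]`. -/
noncomputable def betaPlus (L q₀ h θ α : ℝ) : ℂ :=
  ((-(q₀ * (Real.sin θ * Real.cosh (2 * L * mu0 q₀ h) -
      (h * Real.cos α - q₀ * Real.cos θ) * Real.sinh (2 * L * mu0 q₀ h) / mu0 q₀ h)) : ℝ) : ℂ)

/-- `β₋ = −q₀·[sin θ·cosh(2Lμ₀) + (h cos α − q₀ cos θ)·sinh(2Lμ₀)/μ₀]`. -/
noncomputable def betaMinus (L q₀ h θ α : ℝ) : ℂ :=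
  ((-(q₀ * (Real.sin θ * Real.cosh (2 * L * mu0 q₀ h) +
      (h * Real.cos α - q₀ * Real.cos θ) * Real.sinh (2 * L * mu0 q₀ h) / mu0 q₀ h)) : ℝ) : ℂ)

/-!
Near `z = ±q₀` we have `k(z)² < h²`, so `μ(z) = ± i √(h² − k(z)²)`. Both coefficients have the
form `N(μ(z), z) / (λ(z) μ(z))` with `N` odd in its first argument, so they do not depend on the
choice of root and we may use the continuous branch `i √(h² − k²)`, which equals `i μ₀ ≠ 0` at
`±q₀`. Since `λ(z) = (z − c)(z + c)/(2z)` whenever `c² = q₀²`, the function `(z − c)·a(z)` agrees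
near `c` with `2z/(z + c) · N(μ(z), z)/μ(z)`, which is continuous at `c`; its value there is the
residue, and `cos(2Liμ₀) = cosh(2Lμ₀)`, `sin(2Liμ₀) = i sinh(2Lμ₀)` give the closed forms.
-/

noncomputable def muBranch (q₀ h z : ℝ) : ℂ := I * (Real.sqrt (h ^ 2 - kk q₀ z ^ 2) : ℂ)

noncomputable def aNum (L q₀ h θ α : ℝ) (w : ℂ) (z : ℝ) : ℂ :=
  Complex.exp (I * ((2 * L * lam q₀ z + θ : ℝ) : ℂ)) *
    (w * Complex.cos (2 * (L : ℂ) * w) *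
        ((lam q₀ z : ℂ) * (Real.cos θ : ℂ) - I * (kk q₀ z : ℂ) * (Real.sin θ : ℂ)) +
      I * Complex.sin (2 * (L : ℂ) * w) *
        (((h * q₀ * Real.cos α : ℝ) : ℂ) -
          (kk q₀ z : ℂ) *
            ((kk q₀ z : ℂ) * (Real.cos θ : ℂ) -
              I * (lam q₀ z : ℂ) * (Real.sin θ : ℂ))))

noncomputable def bNum (L q₀ h θ α : ℝ) (w : ℂ) (z : ℝ) : ℂ :=
  -(q₀ : ℂ) * w * (Real.sin θ : ℂ) * Complex.cos (2 * (L : ℂ) * w) +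
    (((h * kk q₀ z * Real.cos α - kk q₀ z * q₀ * Real.cos θ : ℝ) : ℂ) -
        I * (h : ℂ) * (lam q₀ z : ℂ) * (Real.sin α : ℂ)) *
      Complex.sin (2 * (L : ℂ) * w)

lemma aBox_eq (L q₀ h θ α : ℝ) (μ : ℝ → ℂ) (z : ℝ) :
    aBox L q₀ h θ α μ z = 1 / (lam q₀ z * μ z) * aNum L q₀ h θ α (μ z) z := by
  rw [aBox, aNum, mul_assoc]

lemma bBox_eq (L q₀ h θ α : ℝ) (μ : ℝ → ℂ) (z : ℝ) :
    bBox L q₀ h θ α μ z = 1 / (lam q₀ z * μ z) * bNum L q₀ h θ α (μ z) z := rfl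

lemma aNum_neg (L q₀ h θ α : ℝ) (w : ℂ) (z : ℝ) :
    aNum L q₀ h θ α (-w) z = -aNum L q₀ h θ α w z := by
  simp only [aNum, mul_neg, Complex.cos_neg, Complex.sin_neg]
  ring

lemma bNum_neg (L q₀ h θ α : ℝ) (w : ℂ) (z : ℝ) :
    bNum L q₀ h θ α (-w) z = -bNum L q₀ h θ α w z := by
  simp only [bNum, mul_neg, neg_mul, Complex.cos_neg, Complex.sin_neg]
  ring

lemma continuousAt_kk (q₀ : ℝ) {c : ℝ} (hc : c ≠ 0) : ContinuousAt (kk q₀) c := by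
  unfold kk; fun_prop (disch := exact hc)

lemma continuousAt_lam (q₀ : ℝ) {c : ℝ} (hc : c ≠ 0) : ContinuousAt (lam q₀) c := by
  unfold lam; fun_prop (disch := exact hc)

lemma continuousAt_muBranch (q₀ h : ℝ) {c : ℝ} (hc : c ≠ 0) :
    ContinuousAt (muBranch q₀ h) c := by
  have := continuousAt_kk q₀ hc
  unfold muBranch; fun_prop

lemma kk_self_of_sq_eq {q₀ c : ℝ} (hc0 : c ≠ 0) (hc2 : c ^ 2 = q₀ ^ 2) : kk q₀ c = c := by
  rw [kk, ← hc2]; field_simp; ring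

lemma lam_self_of_sq_eq {q₀ c : ℝ} (hc2 : c ^ 2 = q₀ ^ 2) : lam q₀ c = 0 := by
  rw [lam, ← hc2]; field_simp; ring

lemma sub_mul_inv_lam {q₀ c z : ℝ} (hc2 : c ^ 2 = q₀ ^ 2) (hz0 : z ≠ 0) (hzc : z ≠ c)
    (hzc' : z ≠ -c) : (z - c) * (lam q₀ z)⁻¹ = 2 * z / (z + c) := by
  have hsub : z - c ≠ 0 := sub_ne_zero.mpr hzc
  have hadd : z + c ≠ 0 := by rwa [← sub_neg_eq_add, sub_ne_zero]
  rw [lam, ← hc2, show (z - c ^ 2 / z) / 2 = (z - c) * (z + c) / (2 * z) by field_simp; ring]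
  field_simp

lemma muBranch_sq {q₀ h z : ℝ} (hz : kk q₀ z ^ 2 ≤ h ^ 2) :
    muBranch q₀ h z ^ 2 = (kk q₀ z : ℂ) ^ 2 - (h : ℂ) ^ 2 := by
  rw [muBranch, mul_pow, I_sq, ← ofReal_pow, Real.sq_sqrt (sub_nonneg.mpr hz)]
  push_cast; ring

lemma muBranch_self_of_sq_eq {q₀ h c : ℝ} (hc0 : c ≠ 0) (hc2 : c ^ 2 = q₀ ^ 2) :
    muBranch q₀ h c = I * mu0 q₀ h := by
  rw [muBranch, kk_self_of_sq_eq hc0 hc2, hc2, mu0]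

lemma one_div_mul_eq_of_sq_eq {K : Type*} [Field K] {N : K → K} (hN : ∀ w, N (-w) = -N w)
    {l w v : K} (hsq : w ^ 2 = v ^ 2) : 1 / (l * w) * N w = l⁻¹ * (N v / v) := by
  rcases sq_eq_sq_iff_eq_or_eq_neg.mp hsq with rfl | rfl
  · rw [one_div, mul_inv, div_eq_mul_inv]; ring
  · rw [hN, one_div, mul_inv, inv_neg, div_eq_mul_inv]; ring

lemma eventually_residue_nbhd {q₀ h c : ℝ} (hc0 : c ≠ 0) (hc2 : c ^ 2 = q₀ ^ 2)
    (hch : q₀ ^ 2 < h ^ 2) :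
    ∀ᶠ z in 𝓝[≠] c, z ≠ 0 ∧ z ≠ c ∧ z ≠ -c ∧ kk q₀ z ^ 2 ≤ h ^ 2 := by
  have hk : ∀ᶠ z in 𝓝 c, kk q₀ z ^ 2 < h ^ 2 :=
    ((continuousAt_kk q₀ hc0).pow 2).eventually_lt continuousAt_const
      (by show kk q₀ c ^ 2 < h ^ 2; rwa [kk_self_of_sq_eq hc0 hc2, hc2])
  have hneg : ∀ᶠ z in 𝓝 c, z ≠ -c := eventually_ne_nhds (by contrapose! hc0; linarith)
  filter_upwards [nhdsWithin_le_nhds ((eventually_ne_nhds hc0).and (hneg.and hk)),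
    self_mem_nhdsWithin] with z ⟨hz0, hzc', hzk⟩ hzc
  exact ⟨hz0, hzc, hzc', hzk.le⟩

theorem tendsto_sub_mul_residue {q₀ h c : ℝ} (N : ℂ → ℝ → ℂ) (hN : ∀ w z, N (-w) z = -N w z)
    (μ : ℝ → ℂ) (hμ : ∀ z : ℝ, z ≠ 0 → μ z ^ 2 = (kk q₀ z : ℂ) ^ 2 - (h : ℂ) ^ 2)
    (hc0 : c ≠ 0) (hc2 : c ^ 2 = q₀ ^ 2) (hch : q₀ ^ 2 < h ^ 2)
    (hN_cont : ContinuousAt (fun z => N (muBranch q₀ h z) z / muBranch q₀ h z) c) :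
    Tendsto (fun z : ℝ => ((z : ℂ) - c) * (1 / (lam q₀ z * μ z) * N (μ z) z)) (𝓝[≠] c)
      (𝓝 (N (muBranch q₀ h c) c / muBranch q₀ h c)) := by
  set G := fun z => N (muBranch q₀ h z) z / muBranch q₀ h z
  have hfactor : ∀ᶠ z : ℝ in 𝓝[≠] c,
      ((z : ℂ) - c) * (1 / (lam q₀ z * μ z) * N (μ z) z) = ((2 * z / (z + c) : ℝ) : ℂ) * G z := by
    filter_upwards [eventually_residue_nbhd hc0 hc2 hch] with z ⟨hz0, hzc, hzc', hzk⟩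
    rw [one_div_mul_eq_of_sq_eq (N := (N · z)) (hN · z)
        ((hμ z hz0).trans (muBranch_sq hzk).symm), ← mul_assoc, ← sub_mul_inv_lam hc2 hz0 hzc hzc']
    push_cast; rfl
  have hlim : Tendsto (fun z : ℝ => ((2 * z / (z + c) : ℝ) : ℂ) * G z) (𝓝 c) (𝓝 (G c)) := by
    have hcc : c + c ≠ 0 := by contrapose! hc0; linarith
    have : ContinuousAt (fun z : ℝ => ((2 * z / (z + c) : ℝ) : ℂ) * G z) c := by
      fun_prop (disch := exact hcc)
    simpa [show 2 * c / (c + c) = 1 by field_simp; ring] using this.tendsto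
  exact (hlim.mono_left nhdsWithin_le_nhds).congr' (hfactor.mono fun _ hz => hz.symm)

lemma continuousAt_aNum_muBranch_div (L q₀ h θ α : ℝ) {c : ℝ} (hc0 : c ≠ 0)
    (hne : muBranch q₀ h c ≠ 0) :
    ContinuousAt (fun z => aNum L q₀ h θ α (muBranch q₀ h z) z / muBranch q₀ h z) c := by
  have := continuousAt_kk q₀ hc0
  have := continuousAt_lam q₀ hc0
  have := continuousAt_muBranch q₀ h hc0
  unfold aNum; fun_prop (disch := exact hne)

lemma continuousAt_bNum_muBranch_div (L q₀ h θ α : ℝ) {c : ℝ} (hc0 : c ≠ 0)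
    (hne : muBranch q₀ h c ≠ 0) :
    ContinuousAt (fun z => bNum L q₀ h θ α (muBranch q₀ h z) z / muBranch q₀ h z) c := by
  have := continuousAt_kk q₀ hc0
  have := continuousAt_lam q₀ hc0
  have := continuousAt_muBranch q₀ h hc0
  unfold bNum; fun_prop (disch := exact hne)

lemma cos_two_mul_I_mul (L m : ℝ) : Complex.cos (2 * L * (I * m)) = Real.cosh (2 * L * m) := by
  rw [show (2 * L * (I * m) : ℂ) = ((2 * L * m : ℝ) : ℂ) * I by push_cast; ring, cos_mul_I,
    ofReal_cosh]

lemma sin_two_mul_I_mul (L m : ℝ) :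
    Complex.sin (2 * L * (I * m)) = Real.sinh (2 * L * m) * I := by
  rw [show (2 * L * (I * m) : ℂ) = ((2 * L * m : ℝ) : ℂ) * I by push_cast; ring, sin_mul_I,
    ofReal_sinh]

lemma aNum_I_mul_div {L q₀ h θ α c m : ℝ} (hc0 : c ≠ 0) (hc2 : c ^ 2 = q₀ ^ 2) (hm : m ≠ 0) :
    aNum L q₀ h θ α (I * m) c / (I * m) = I * Complex.exp (I * θ) *
      ((-(c * Real.sin θ) * Real.cosh (2 * L * m) +
        q₀ * (h * Real.cos α - q₀ * Real.cos θ) * Real.sinh (2 * L * m) / m : ℝ) : ℂ) := by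
  have hc2' : (c : ℂ) ^ 2 = (q₀ : ℂ) ^ 2 := by exact_mod_cast hc2
  have hm' : (m : ℂ) ≠ 0 := by exact_mod_cast hm
  rw [aNum, kk_self_of_sq_eq hc0 hc2, lam_self_of_sq_eq hc2, cos_two_mul_I_mul,
    sin_two_mul_I_mul]
  push_cast
  rw [mul_zero, zero_add]
  field_simp
  linear_combination (-I * Complex.cos θ * Complex.sinh (m * 2 * L)) * hc2'

lemma bNum_I_mul_div {L q₀ h θ α c m : ℝ} (hc0 : c ≠ 0) (hc2 : c ^ 2 = q₀ ^ 2) (hm : m ≠ 0) :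
    bNum L q₀ h θ α (I * m) c / (I * m) =
      ((-(q₀ * Real.sin θ) * Real.cosh (2 * L * m) +
        c * (h * Real.cos α - q₀ * Real.cos θ) * Real.sinh (2 * L * m) / m : ℝ) : ℂ) := by
  have hm' : (m : ℂ) ≠ 0 := by exact_mod_cast hm
  rw [bNum, kk_self_of_sq_eq hc0 hc2, lam_self_of_sq_eq hc2, cos_two_mul_I_mul,
    sin_two_mul_I_mul]
  push_cast
  field_simp
  ring

theorem tendsto_sub_mul_aBox (L q₀ h θ α : ℝ) (hq : q₀ ^ 2 < h ^ 2) (μ : ℝ → ℂ)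
    (hμ : ∀ z : ℝ, z ≠ 0 → μ z ^ 2 = (kk q₀ z : ℂ) ^ 2 - (h : ℂ) ^ 2)
    {c : ℝ} (hc0 : c ≠ 0) (hc2 : c ^ 2 = q₀ ^ 2) :
    Tendsto (fun z : ℝ => ((z : ℂ) - c) * aBox L q₀ h θ α μ z) (𝓝[≠] c)
      (𝓝 (I * Complex.exp (I * θ) *
        ((-(c * Real.sin θ) * Real.cosh (2 * L * mu0 q₀ h) +
          q₀ * (h * Real.cos α - q₀ * Real.cos θ) * Real.sinh (2 * L * mu0 q₀ h) / mu0 q₀ h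
          : ℝ) : ℂ))) := by
  have hm : mu0 q₀ h ≠ 0 := (Real.sqrt_pos.mpr (sub_pos.mpr hq)).ne'
  have hν := muBranch_self_of_sq_eq (h := h) hc0 hc2
  have hν0 : muBranch q₀ h c ≠ 0 := hν ▸ mul_ne_zero I_ne_zero (ofReal_ne_zero.mpr hm)
  simp_rw [aBox_eq, ← aNum_I_mul_div hc0 hc2 hm, ← hν]
  exact tendsto_sub_mul_residue _ (aNum_neg L q₀ h θ α) μ hμ hc0 hc2 hq
    (continuousAt_aNum_muBranch_div L q₀ h θ α hc0 hν0)

theorem tendsto_sub_mul_bBox (L q₀ h θ α : ℝ) (hq : q₀ ^ 2 < h ^ 2) (μ : ℝ → ℂ)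
    (hμ : ∀ z : ℝ, z ≠ 0 → μ z ^ 2 = (kk q₀ z : ℂ) ^ 2 - (h : ℂ) ^ 2)
    {c : ℝ} (hc0 : c ≠ 0) (hc2 : c ^ 2 = q₀ ^ 2) :
    Tendsto (fun z : ℝ => ((z : ℂ) - c) * bBox L q₀ h θ α μ z) (𝓝[≠] c)
      (𝓝 ((-(q₀ * Real.sin θ) * Real.cosh (2 * L * mu0 q₀ h) +
          c * (h * Real.cos α - q₀ * Real.cos θ) * Real.sinh (2 * L * mu0 q₀ h) / mu0 q₀ h
          : ℝ) : ℂ)) := by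
  have hm : mu0 q₀ h ≠ 0 := (Real.sqrt_pos.mpr (sub_pos.mpr hq)).ne'
  have hν := muBranch_self_of_sq_eq (h := h) hc0 hc2
  have hν0 : muBranch q₀ h c ≠ 0 := hν ▸ mul_ne_zero I_ne_zero (ofReal_ne_zero.mpr hm)
  simp_rw [bBox_eq, ← bNum_I_mul_div hc0 hc2 hm, ← hν]
  exact tendsto_sub_mul_residue _ (bNum_neg L q₀ h θ α) μ hμ hc0 hc2 hq
    (continuousAt_bNum_muBranch_div L q₀ h θ α hc0 hν0)

lemma I_mul_exp_neg_mul_I_mul_exp (x : ℂ) :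
    I * Complex.exp (-(I * x)) * (I * Complex.exp (I * x)) = -1 := by
  rw [mul_mul_mul_comm, I_mul_I, ← Complex.exp_add, neg_add_cancel, Complex.exp_zero, neg_one_mul]

lemma betaPlus_eq (L q₀ h θ α : ℝ) :
    betaPlus L q₀ h θ α = -I * Complex.exp (-(I * θ)) * alphaPlus L q₀ h θ α := by
  rw [betaPlus, alphaPlus]
  push_cast
  linear_combination (q₀ * (-Complex.sin θ * Complex.cosh (2 * L * mu0 q₀ h) +
    (h * Complex.cos α - q₀ * Complex.cos θ) * Complex.sinh (2 * L * mu0 q₀ h) / mu0 q₀ h)) *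
    I_mul_exp_neg_mul_I_mul_exp θ

lemma betaMinus_eq (L q₀ h θ α : ℝ) :
    betaMinus L q₀ h θ α = I * Complex.exp (-(I * θ)) * alphaMinus L q₀ h θ α := by
  rw [betaMinus, alphaMinus]
  push_cast
  linear_combination (-q₀ * (Complex.sin θ * Complex.cosh (2 * L * mu0 q₀ h) +
    (h * Complex.cos α - q₀ * Complex.cos θ) * Complex.sinh (2 * L * mu0 q₀ h) / mu0 q₀ h)) *
    I_mul_exp_neg_mul_I_mul_exp θ

theorem box_scattering_residues_general (L q₀ h θ α : ℝ) (hq₀ : 0 < q₀)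
    (hh : q₀ < h) (μ : ℝ → ℂ)
    (hμ : ∀ z : ℝ, z ≠ 0 → (μ z) ^ 2 = (kk q₀ z : ℂ) ^ 2 - (h : ℂ) ^ 2) :
    Tendsto (fun z : ℝ => ((z : ℂ) - (q₀ : ℂ)) * aBox L q₀ h θ α μ z)
      (𝓝[≠] q₀) (𝓝 (alphaPlus L q₀ h θ α)) ∧
    Tendsto (fun z : ℝ => ((z : ℂ) + (q₀ : ℂ)) * aBox L q₀ h θ α μ z)
      (𝓝[≠] (-q₀)) (𝓝 (alphaMinus L q₀ h θ α)) ∧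
    Tendsto (fun z : ℝ => ((z : ℂ) - (q₀ : ℂ)) * bBox L q₀ h θ α μ z)
      (𝓝[≠] q₀) (𝓝 (betaPlus L q₀ h θ α)) ∧
    Tendsto (fun z : ℝ => ((z : ℂ) + (q₀ : ℂ)) * bBox L q₀ h θ α μ z)
      (𝓝[≠] (-q₀)) (𝓝 (betaMinus L q₀ h θ α)) ∧
    betaPlus L q₀ h θ α =
      -Complex.I * Complex.exp (-(Complex.I * θ)) * alphaPlus L q₀ h θ α ∧
    betaMinus L q₀ h θ α =
      Complex.I * Complex.exp (-(Complex.I * θ)) * alphaMinus L q₀ h θ α ∧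
    (betaPlus L q₀ h θ α).im = 0 ∧ (betaMinus L q₀ h θ α).im = 0 := by
  have hq : q₀ ^ 2 < h ^ 2 := pow_lt_pow_left₀ hh hq₀.le two_ne_zero
  have hneg : -q₀ ≠ 0 := neg_ne_zero.mpr hq₀.ne'
  have haP := tendsto_sub_mul_aBox L q₀ h θ α hq μ hμ hq₀.ne' rfl
  have haM := tendsto_sub_mul_aBox L q₀ h θ α hq μ hμ hneg (neg_sq q₀)
  have hbP := tendsto_sub_mul_bBox L q₀ h θ α hq μ hμ hq₀.ne' rfl
  have hbM := tendsto_sub_mul_bBox L q₀ h θ α hq μ hμ hneg (neg_sq q₀)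
  simp only [ofReal_neg, sub_neg_eq_add] at haM hbM
  refine ⟨?_, ?_, ?_, ?_, betaPlus_eq L q₀ h θ α, betaMinus_eq L q₀ h θ α,
    ofReal_im _, ofReal_im _⟩
  · convert haP using 2; rw [alphaPlus]; push_cast; ring
  · convert haM using 2; rw [alphaMinus]; push_cast; ring
  · convert hbP using 2; rw [betaPlus]; push_cast; ring
  · convert hbM using 2; rw [betaMinus]; push_cast; ring

/-- the residues `α± = lim_{z→±q₀}(z ∓ q₀)a(z)` and
`β± = lim_{z→±q₀}(z ∓ q₀)b(z)` of the box scattering coefficients exist, with the stated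
explicit values; moreover `β± = ∓i e^{−iθ} α±` and `β±` are real. -/
theorem box_scattering_residues (L q₀ h θ α : ℝ) (hL : 0 ≤ L) (hq₀ : 0 < q₀)
    (hh : q₀ < h) (μ : ℝ → ℂ)
    (hμ : ∀ z : ℝ, z ≠ 0 → (μ z) ^ 2 = (kk q₀ z : ℂ) ^ 2 - (h : ℂ) ^ 2) :
    Tendsto (fun z : ℝ => ((z : ℂ) - (q₀ : ℂ)) * aBox L q₀ h θ α μ z)
      (𝓝[≠] q₀) (𝓝 (alphaPlus L q₀ h θ α)) ∧
    Tendsto (fun z : ℝ => ((z : ℂ) + (q₀ : ℂ)) * aBox L q₀ h θ α μ z)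
      (𝓝[≠] (-q₀)) (𝓝 (alphaMinus L q₀ h θ α)) ∧
    Tendsto (fun z : ℝ => ((z : ℂ) - (q₀ : ℂ)) * bBox L q₀ h θ α μ z)
      (𝓝[≠] q₀) (𝓝 (betaPlus L q₀ h θ α)) ∧
    Tendsto (fun z : ℝ => ((z : ℂ) + (q₀ : ℂ)) * bBox L q₀ h θ α μ z)
      (𝓝[≠] (-q₀)) (𝓝 (betaMinus L q₀ h θ α)) ∧
    betaPlus L q₀ h θ α =
      -Complex.I * Complex.exp (-(Complex.I * θ)) * alphaPlus L q₀ h θ α ∧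
    betaMinus L q₀ h θ α =
      Complex.I * Complex.exp (-(Complex.I * θ)) * alphaMinus L q₀ h θ α ∧
    (betaPlus L q₀ h θ α).im = 0 ∧ (betaMinus L q₀ h θ α).im = 0 :=
  box_scattering_residues_general L q₀ h θ α hq₀ hh μ hμ
end

section
/- For box parameters L ≥ 0, q₀ > 0, h > q₀, θ, α ∈ ℝ, let a(z), b(z) be the explicit box scattering coefficients and ρ(z) = b(z)/a(z) the reflection coefficient, and set μ₀ = √(h² − q₀²) and C± = ∓ sin θ · cosh(2Lμ₀) + (h cos α − q₀ cos θ)·sinh(2Lμ₀)/μ₀. If C₊ ≠ 0, then lim_{z→q₀} ρ(z) = −i e^{−iθ}; if C₋ ≠ 0, then lim_{z→−q₀} ρ(z) = i e^{−iθ}. That is, ρ(±q₀) = ∓ i e^{−iθ}. -/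
open Complex Topology Filter

/-- `C₊ = −sin θ·cosh(2Lμ₀) + (h cos α − q₀ cos θ)·sinh(2Lμ₀)/μ₀`. -/
noncomputable def CPlus (L q₀ h θ α : ℝ) : ℝ :=
  -Real.sin θ * Real.cosh (2 * L * mu0 q₀ h) +
    (h * Real.cos α - q₀ * Real.cos θ) * Real.sinh (2 * L * mu0 q₀ h) / mu0 q₀ h

/-- `C₋ = sin θ·cosh(2Lμ₀) + (h cos α − q₀ cos θ)·sinh(2Lμ₀)/μ₀`. -/
noncomputable def CMinus (L q₀ h θ α : ℝ) : ℝ :=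
  Real.sin θ * Real.cosh (2 * L * mu0 q₀ h) +
    (h * Real.cos α - q₀ * Real.cos θ) * Real.sinh (2 * L * mu0 q₀ h) / mu0 q₀ h

/-!
Write `a = e^{i(2Lλ+θ)} A(μ)/(λμ)` and `b = B(μ)/(λμ)`. The brackets `A(m)`, `B(m)` (`aBracket`,
`bBracket`) are odd in `m`, so `ρ = b/a = e^{-i(2Lλ+θ)} B(μ)/A(μ)` does not depend on the choice
of square root `μ`, and near `z₀ = ±q₀` (where `k(z)² < h²`) we may use the continuous branch
`μ = i√(h² − k²)` (`sqrtBranch`). At a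
branch point `z₀² = q₀²` we have `λ = 0` and `k = z₀`, and then `q₀ B(m) = −i z₀ A(m)` for every
`m`. So `ρ → −i (z₀/q₀) e^{−iθ}` as soon as `A(iμ₀) = −q₀ μ₀ C± ≠ 0`.
-/

namespace BoxScattering

variable (L q₀ h θ α : ℝ)

noncomputable def aBracket (m : ℂ) (z : ℝ) : ℂ :=
  m * Complex.cos (2 * (L : ℂ) * m) *
      ((lam q₀ z : ℂ) * (Real.cos θ : ℂ) - Complex.I * (kk q₀ z : ℂ) * (Real.sin θ : ℂ)) +
    Complex.I * Complex.sin (2 * (L : ℂ) * m) *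
      (((h * q₀ * Real.cos α : ℝ) : ℂ) -
        (kk q₀ z : ℂ) *
          ((kk q₀ z : ℂ) * (Real.cos θ : ℂ) - Complex.I * (lam q₀ z : ℂ) * (Real.sin θ : ℂ)))

noncomputable def bBracket (m : ℂ) (z : ℝ) : ℂ :=
  -(q₀ : ℂ) * m * (Real.sin θ : ℂ) * Complex.cos (2 * (L : ℂ) * m) +
    (((h * kk q₀ z * Real.cos α - kk q₀ z * q₀ * Real.cos θ : ℝ) : ℂ) -
        Complex.I * (h : ℂ) * (lam q₀ z : ℂ) * (Real.sin α : ℂ)) *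
      Complex.sin (2 * (L : ℂ) * m)

lemma aBracket_neg (m : ℂ) (z : ℝ) :
    aBracket L q₀ h θ α (-m) z = -aBracket L q₀ h θ α m z := by
  simp only [aBracket, mul_neg, Complex.cos_neg, Complex.sin_neg]
  ring

lemma bBracket_neg (m : ℂ) (z : ℝ) :
    bBracket L q₀ h θ α (-m) z = -bBracket L q₀ h θ α m z := by
  simp only [bBracket, mul_neg, Complex.cos_neg, Complex.sin_neg]
  ring

lemma bBracket_div_aBracket_of_sq_eq {m m' : ℂ} (hm : m' ^ 2 = m ^ 2) (z : ℝ) :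
    bBracket L q₀ h θ α m' z / aBracket L q₀ h θ α m' z =
      bBracket L q₀ h θ α m z / aBracket L q₀ h θ α m z := by
  rcases sq_eq_sq_iff_eq_or_eq_neg.1 hm with rfl | rfl
  · rfl
  · rw [aBracket_neg, bBracket_neg, neg_div_neg_eq]

lemma bBox_div_aBox (μ : ℝ → ℂ) {z : ℝ} (hlam : lam q₀ z ≠ 0) (hμ : μ z ≠ 0) :
    bBox L q₀ h θ α μ z / aBox L q₀ h θ α μ z =
      bBracket L q₀ h θ α (μ z) z / aBracket L q₀ h θ α (μ z) z *
        Complex.exp (-(Complex.I * ((2 * L * lam q₀ z + θ : ℝ) : ℂ))) := by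
  have hpre : 1 / ((lam q₀ z : ℂ) * μ z) ≠ 0 :=
    one_div_ne_zero (mul_ne_zero (Complex.ofReal_ne_zero.2 hlam) hμ)
  change 1 / ((lam q₀ z : ℂ) * μ z) * bBracket L q₀ h θ α (μ z) z /
      (1 / ((lam q₀ z : ℂ) * μ z) *
        Complex.exp (Complex.I * ((2 * L * lam q₀ z + θ : ℝ) : ℂ)) *
        aBracket L q₀ h θ α (μ z) z) = _
  rw [mul_assoc _ (Complex.exp _), mul_div_mul_left _ _ hpre, Complex.exp_neg,
    div_mul_eq_div_div_swap, div_eq_mul_inv]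

lemma kk_of_sq_eq {z : ℝ} (hsq : z ^ 2 = q₀ ^ 2) : kk q₀ z = z := by
  unfold kk
  rw [← hsq]
  field_simp
  ring

lemma lam_of_sq_eq {z : ℝ} (hsq : z ^ 2 = q₀ ^ 2) : lam q₀ z = 0 := by
  unfold lam
  rw [← hsq]
  field_simp
  ring

lemma lam_ne_zero {z : ℝ} (hz : z ≠ 0) (hsq : z ^ 2 ≠ q₀ ^ 2) : lam q₀ z ≠ 0 := by
  unfold lam
  field_simp
  exact div_ne_zero (sub_ne_zero.2 hsq) (mul_ne_zero hz two_ne_zero)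

lemma q₀_mul_bBracket_of_sq_eq (m : ℂ) {z : ℝ} (hsq : z ^ 2 = q₀ ^ 2) :
    q₀ * bBracket L q₀ h θ α m z = -Complex.I * z * aBracket L q₀ h θ α m z := by
  have hsqC : (z : ℂ) ^ 2 = (q₀ : ℂ) ^ 2 := by exact_mod_cast hsq
  simp only [aBracket, bBracket, kk_of_sq_eq q₀ hsq, lam_of_sq_eq q₀ hsq]
  push_cast
  linear_combination
    (m * Complex.sin θ * Complex.cos (2 * L * m) + z * Complex.sin (2 * L * m) * Complex.cos θ) *
        hsqC +
      (-(z ^ 2 * m * Complex.cos (2 * L * m) * Complex.sin θ) +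
        z * Complex.sin (2 * L * m) * (h * q₀ * Complex.cos α - z ^ 2 * Complex.cos θ)) *
        Complex.I_sq

lemma bBracket_div_aBracket_eq_of_sq_eq {m : ℂ} {z : ℝ} (hq₀ : q₀ ≠ 0) (hsq : z ^ 2 = q₀ ^ 2)
    (hA : aBracket L q₀ h θ α m z ≠ 0) :
    bBracket L q₀ h θ α m z / aBracket L q₀ h θ α m z = -Complex.I * (z / q₀) := by
  have hq₀C : (q₀ : ℂ) ≠ 0 := Complex.ofReal_ne_zero.2 hq₀
  rw [div_eq_iff hA, ← mul_right_inj' hq₀C, q₀_mul_bBracket_of_sq_eq L q₀ h θ α m hsq]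
  field_simp

lemma mu0_pos (hqh : q₀ ^ 2 < h ^ 2) : 0 < mu0 q₀ h :=
  Real.sqrt_pos.2 (sub_pos.2 hqh)

noncomputable def sqrtBranch (z : ℝ) : ℂ :=
  Complex.I * (Real.sqrt (h ^ 2 - kk q₀ z ^ 2) : ℂ)

lemma sqrtBranch_sq {z : ℝ} (hk : kk q₀ z ^ 2 ≤ h ^ 2) :
    sqrtBranch q₀ h z ^ 2 = (kk q₀ z : ℂ) ^ 2 - (h : ℂ) ^ 2 := by
  rw [sqrtBranch, mul_pow, Complex.I_sq, ← Complex.ofReal_pow, Real.sq_sqrt (sub_nonneg.2 hk)]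
  push_cast
  ring

lemma sqrtBranch_of_sq_eq {z : ℝ} (hsq : z ^ 2 = q₀ ^ 2) :
    sqrtBranch q₀ h z = Complex.I * mu0 q₀ h := by
  rw [sqrtBranch, kk_of_sq_eq q₀ hsq, hsq, mu0]

lemma aBracket_I_mu0_of_sq_eq {z : ℝ} (hsq : z ^ 2 = q₀ ^ 2) :
    aBracket L q₀ h θ α (Complex.I * mu0 q₀ h) z =
      ((mu0 q₀ h * z * Real.sin θ * Real.cosh (2 * L * mu0 q₀ h) -
        q₀ * (h * Real.cos α - q₀ * Real.cos θ) * Real.sinh (2 * L * mu0 q₀ h) : ℝ) : ℂ) := by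
  have hsqC : (z : ℂ) ^ 2 = (q₀ : ℂ) ^ 2 := by exact_mod_cast hsq
  have harg :
      2 * (L : ℂ) * (Complex.I * mu0 q₀ h) = ((2 * L * mu0 q₀ h : ℝ) : ℂ) * Complex.I := by
    push_cast
    ring
  rw [aBracket, harg, Complex.cos_mul_I, Complex.sin_mul_I, kk_of_sq_eq q₀ hsq,
    lam_of_sq_eq q₀ hsq]
  push_cast
  linear_combination
    (Complex.sinh (2 * L * mu0 q₀ h) * Complex.cos θ) * hsqC +
      (Complex.sinh (2 * L * mu0 q₀ h) * (h * q₀ * Complex.cos α - z ^ 2 * Complex.cos θ) -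
        mu0 q₀ h * Complex.cosh (2 * L * mu0 q₀ h) * z * Complex.sin θ) * Complex.I_sq

lemma aBracket_I_mu0_self (hμ₀ : mu0 q₀ h ≠ 0) :
    aBracket L q₀ h θ α (Complex.I * mu0 q₀ h) q₀ =
      ((-(q₀ * mu0 q₀ h * CPlus L q₀ h θ α) : ℝ) : ℂ) := by
  rw [aBracket_I_mu0_of_sq_eq L q₀ h θ α rfl, CPlus]
  congr 1
  field_simp
  ring

lemma aBracket_I_mu0_neg_self (hμ₀ : mu0 q₀ h ≠ 0) :
    aBracket L q₀ h θ α (Complex.I * mu0 q₀ h) (-q₀) =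
      ((-(q₀ * mu0 q₀ h * CMinus L q₀ h θ α) : ℝ) : ℂ) := by
  rw [aBracket_I_mu0_of_sq_eq L q₀ h θ α (neg_sq q₀), CMinus]
  congr 1
  field_simp
  ring

lemma tendsto_bBox_div_aBox_of_sq_eq (μ : ℝ → ℂ)
    (hμ : ∀ z : ℝ, z ≠ 0 → μ z ^ 2 = (kk q₀ z : ℂ) ^ 2 - (h : ℂ) ^ 2)
    {z₀ : ℝ} (hq₀ : q₀ ≠ 0) (hsq : z₀ ^ 2 = q₀ ^ 2) (hqh : q₀ ^ 2 < h ^ 2)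
    (hA : aBracket L q₀ h θ α (Complex.I * mu0 q₀ h) z₀ ≠ 0) :
    Tendsto (fun z => bBox L q₀ h θ α μ z / aBox L q₀ h θ α μ z) (𝓝[≠] z₀)
      (𝓝 (-Complex.I * (z₀ / q₀) * Complex.exp (-(Complex.I * θ)))) := by
  have hz₀ : z₀ ≠ 0 := fun h0 => hq₀ (by simpa [h0, eq_comm] using hsq)
  set F : ℝ → ℂ := fun z =>
    bBracket L q₀ h θ α (sqrtBranch q₀ h z) z / aBracket L q₀ h θ α (sqrtBranch q₀ h z) z *
      Complex.exp (-(Complex.I * ((2 * L * lam q₀ z + θ : ℝ) : ℂ)))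
  have hF : ContinuousAt F z₀ := by
    rw [← sqrtBranch_of_sq_eq q₀ h hsq] at hA
    have hA' : ContinuousAt (fun z => aBracket L q₀ h θ α (sqrtBranch q₀ h z) z) z₀ := by
      unfold aBracket sqrtBranch kk lam
      fun_prop (disch := exact hz₀)
    have hB : ContinuousAt (fun z => bBracket L q₀ h θ α (sqrtBranch q₀ h z) z) z₀ := by
      unfold bBracket sqrtBranch kk lam
      fun_prop (disch := exact hz₀)
    have hE : ContinuousAt
        (fun z => Complex.exp (-(Complex.I * ((2 * L * lam q₀ z + θ : ℝ) : ℂ)))) z₀ := by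
      unfold lam
      fun_prop (disch := exact hz₀)
    exact (hB.div hA' hA).mul hE
  have hFz₀ : F z₀ = -Complex.I * (z₀ / q₀) * Complex.exp (-(Complex.I * θ)) := by
    simp only [F, sqrtBranch_of_sq_eq q₀ h hsq, lam_of_sq_eq q₀ hsq,
      bBracket_div_aBracket_eq_of_sq_eq L q₀ h θ α hq₀ hsq hA, mul_zero, zero_add]
  have hk : ∀ᶠ z in 𝓝 z₀, kk q₀ z ^ 2 < h ^ 2 := by
    have hkz₀ : kk q₀ z₀ ^ 2 < h ^ 2 := by rwa [kk_of_sq_eq q₀ hsq, hsq]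
    refine (ContinuousAt.eventually_lt ?_ continuousAt_const hkz₀)
    unfold kk
    fun_prop (disch := exact hz₀)
  have hFeq : ∀ᶠ z in 𝓝[≠] z₀, F z = bBox L q₀ h θ α μ z / aBox L q₀ h θ α μ z := by
    filter_upwards [nhdsWithin_le_nhds hk, nhdsWithin_le_nhds (eventually_ne_nhds hz₀),
      nhdsWithin_le_nhds (eventually_ne_nhds (neg_ne_self.2 hz₀).symm),
      self_mem_nhdsWithin] with z hkz hz hz_neg hz_ne
    have hzq : z ^ 2 ≠ q₀ ^ 2 := by
      rw [← hsq]
      exact fun h2 => (sq_eq_sq_iff_eq_or_eq_neg.1 h2).elim hz_ne hz_neg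
    have hμz : μ z ≠ 0 := by
      intro h0
      have := hμ z hz
      rw [h0, zero_pow two_ne_zero, eq_comm, sub_eq_zero] at this
      exact hkz.ne (by exact_mod_cast this)
    rw [bBox_div_aBox L q₀ h θ α μ (lam_ne_zero q₀ hz hzq) hμz,
      bBracket_div_aBracket_of_sq_eq L q₀ h θ α
        ((hμ z hz).trans (sqrtBranch_sq q₀ h hkz.le).symm)]
  exact (hFz₀ ▸ hF.tendsto).mono_left nhdsWithin_le_nhds |>.congr' hFeq

end BoxScattering

open BoxScattering in
theorem box_reflection_limit_general (L q₀ h θ α : ℝ) (hq₀ : 0 < q₀)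
    (hh : q₀ < h) (μ : ℝ → ℂ)
    (hμ : ∀ z : ℝ, z ≠ 0 → (μ z) ^ 2 = (kk q₀ z : ℂ) ^ 2 - (h : ℂ) ^ 2) :
    (CPlus L q₀ h θ α ≠ 0 →
      Tendsto (fun z : ℝ => bBox L q₀ h θ α μ z / aBox L q₀ h θ α μ z)
        (𝓝[≠] q₀) (𝓝 (-Complex.I * Complex.exp (-(Complex.I * θ))))) ∧
    (CMinus L q₀ h θ α ≠ 0 →
      Tendsto (fun z : ℝ => bBox L q₀ h θ α μ z / aBox L q₀ h θ α μ z)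
        (𝓝[≠] (-q₀)) (𝓝 (Complex.I * Complex.exp (-(Complex.I * θ))))) := by
  have hqh : q₀ ^ 2 < h ^ 2 := pow_lt_pow_left₀ hh hq₀.le two_ne_zero
  have hμ₀ : mu0 q₀ h ≠ 0 := (mu0_pos q₀ h hqh).ne'
  have hq₀C : (q₀ : ℂ) ≠ 0 := Complex.ofReal_ne_zero.2 hq₀.ne'
  refine ⟨fun hC => ?_, fun hC => ?_⟩
  · have hA : aBracket L q₀ h θ α (Complex.I * mu0 q₀ h) q₀ ≠ 0 := by
      rw [aBracket_I_mu0_self L q₀ h θ α hμ₀, Complex.ofReal_ne_zero, neg_ne_zero]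
      exact mul_ne_zero (mul_ne_zero hq₀.ne' hμ₀) hC
    simpa [div_self hq₀C] using
      tendsto_bBox_div_aBox_of_sq_eq L q₀ h θ α μ hμ hq₀.ne' rfl hqh hA
  · have hA : aBracket L q₀ h θ α (Complex.I * mu0 q₀ h) (-q₀) ≠ 0 := by
      rw [aBracket_I_mu0_neg_self L q₀ h θ α hμ₀, Complex.ofReal_ne_zero, neg_ne_zero]
      exact mul_ne_zero (mul_ne_zero hq₀.ne' hμ₀) hC
    simpa [neg_div, div_self hq₀C] using
      tendsto_bBox_div_aBox_of_sq_eq L q₀ h θ α μ hμ hq₀.ne' (neg_sq q₀) hqh hA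

/-- the reflection coefficient `ρ = b/a` of the box initial condition
satisfies `ρ(±q₀) = ∓i e^{−iθ}` (as limits), provided `C± ≠ 0`. -/
theorem box_reflection_limit (L q₀ h θ α : ℝ) (hL : 0 ≤ L) (hq₀ : 0 < q₀)
    (hh : q₀ < h) (μ : ℝ → ℂ)
    (hμ : ∀ z : ℝ, z ≠ 0 → (μ z) ^ 2 = (kk q₀ z : ℂ) ^ 2 - (h : ℂ) ^ 2) :
    (CPlus L q₀ h θ α ≠ 0 →
      Tendsto (fun z : ℝ => bBox L q₀ h θ α μ z / aBox L q₀ h θ α μ z)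
        (𝓝[≠] q₀) (𝓝 (-Complex.I * Complex.exp (-(Complex.I * θ))))) ∧
    (CMinus L q₀ h θ α ≠ 0 →
      Tendsto (fun z : ℝ => bBox L q₀ h θ α μ z / aBox L q₀ h θ α μ z)
        (𝓝[≠] (-q₀)) (𝓝 (Complex.I * Complex.exp (-(Complex.I * θ))))) :=
  box_reflection_limit_general L q₀ h θ α hq₀ hh μ hμ
end
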